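/- Activation criterion: let σ be a state on ℂ^d⊗ℂ^d and ρ a state on (ℂ^d⊗ℂ²)⊗(ℂ^d⊗ℂ²) (bipartite with A-side ℂ^d⊗ℂ² and B-side ℂ^d⊗ℂ²). If tr[ρ (σ^T ⊗ (I₄/2 − φ₂))] < 0, where σ^T ⊗ (I₄/2 − φ₂) is regrouped to act on (ℂ^d⊗ℂ²)⊗(ℂ^d⊗ℂ²) matching ρ, then the joint state σ⊗ρ, regrouped as a bipartite state across the cut joining both A-parts against both B-parts, is single-copy distillable: F₂(σ⊗ρ) > 1/2. -/

import Mathlib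

open scoped BigOperators ComplexOrder
open Matrix MeasureTheory

noncomputable section

/-- A quantum state: a positive semidefinite complex matrix of unit trace. -/
def IsState {n : Type} [Fintype n] (M : Matrix n n ℂ) : Prop :=
  M.PosSemidef ∧ M.trace = 1

/-- Kronecker product of rectangular complex matrices. -/
def kron {I J K L : Type} (A : Matrix I J ℂ) (B : Matrix K L ℂ) :
    Matrix (I × K) (J × L) ℂ :=
  Matrix.of fun p q => A p.1 q.1 * B p.2 q.2

/-- The projector onto the maximally entangled vector `(1/√D) ∑ᵢ |i,i⟩`. -/
def phiD (D : ℕ) : Matrix (Fin D × Fin D) (Fin D × Fin D) ℂ :=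
  Matrix.of fun p q => if p.1 = p.2 ∧ q.1 = q.2 then (1 / (D : ℂ)) else 0

/-- Single-copy undistillability (trace form):
`tr[(A ⊗ B) ω (A ⊗ B)† (φ₂ − I₄/2)] ≤ 0` for all 2 × m matrices A, B. -/
def SingleCopyUndistillable {I : Type} [Fintype I] [DecidableEq I]
    (ω : Matrix (I × I) (I × I) ℂ) : Prop :=
  ∀ A B : Matrix (Fin 2) I ℂ,
    (Matrix.trace (kron A B * ω * (kron A B)ᴴ * (phiD 2 - (1 / 2 : ℂ) • 1))).re ≤ 0

/-- The SLOCC `D`-dimensional singlet fraction. -/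
def singletFraction (D : ℕ) {I : Type} [Fintype I] [DecidableEq I]
    (ω : Matrix (I × I) (I × I) ℂ) : ℝ :=
  sSup {r : ℝ | ∃ A B : Matrix (Fin D) I ℂ,
    Matrix.trace (kron A B * ω * (kron A B)ᴴ) ≠ 0 ∧
    r = (Matrix.trace (kron A B * ω * (kron A B)ᴴ * phiD D)).re /
        (Matrix.trace (kron A B * ω * (kron A B)ᴴ)).re}

/-- Single-copy undistillability, singlet-fraction form: `F₂(ω) = 1/2`. -/
def SingleCopyUndistillableF {I : Type} [Fintype I] [DecidableEq I]
    (ω : Matrix (I × I) (I × I) ℂ) : Prop :=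
  singletFraction 2 ω = 1 / 2

/-- `n`-fold tensor power of a bipartite state, with all A-factors grouped on one
side and all B-factors on the other. -/
def tensorPow {ι : Type} [Fintype ι] (ρ : Matrix (ι × ι) (ι × ι) ℂ) (n : ℕ) :
    Matrix ((Fin n → ι) × (Fin n → ι)) ((Fin n → ι) × (Fin n → ι)) ℂ :=
  Matrix.of fun x y => ∏ i : Fin n, ρ (x.1 i, x.2 i) (y.1 i, y.2 i)

/-- Permutation symmetry of a state on `ℋ^{⊗k}`: `P_π ω P_π = ω` for every `π ∈ S_k`,
expressed entrywise. -/
def PermSymmetric {ι : Type} {k : ℕ}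
    (ω : Matrix ((Fin k → ι) × (Fin k → ι)) ((Fin k → ι) × (Fin k → ι)) ℂ) : Prop :=
  ∀ (π : Equiv.Perm (Fin k)) x y,
    ω (x.1 ∘ π, x.2 ∘ π) (y.1 ∘ π, y.2 ∘ π) = ω x y

def fillAt {ι : Type} {k : ℕ} (m : Fin k) (a : ι)
    (r : {i : Fin k // i ≠ m} → ι) : Fin k → ι :=
  fun i => if h : i = m then a else r ⟨i, h⟩

/-- Partial trace over all bipartite factors except the `m`-th one. -/
def reduceAt {ι : Type} [Fintype ι] {k : ℕ} (m : Fin k)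
    (ω : Matrix ((Fin k → ι) × (Fin k → ι)) ((Fin k → ι) × (Fin k → ι)) ℂ) :
    Matrix (ι × ι) (ι × ι) ℂ :=
  Matrix.of fun p q =>
    ∑ rA : {i : Fin k // i ≠ m} → ι, ∑ rB : {i : Fin k // i ≠ m} → ι,
      ω (fillAt m p.1 rA, fillAt m p.2 rB) (fillAt m q.1 rA, fillAt m q.2 rB)

/-- Copy-correlated `k`-undistillability (trace form of single-copy undistillability):
there is a permutation-symmetric single-copy-undistillable extension on `ℋ^{⊗k}`
whose reduction to the first bipartite factor is `ρ`. -/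
def CopyCorrKUndistillable (ι : Type) [Fintype ι] [DecidableEq ι] (k : ℕ) (hk : 0 < k)
    (ρ : Matrix (ι × ι) (ι × ι) ℂ) : Prop :=
  ∃ ω : Matrix ((Fin k → ι) × (Fin k → ι)) ((Fin k → ι) × (Fin k → ι)) ℂ,
    IsState ω ∧ PermSymmetric ω ∧ SingleCopyUndistillable ω ∧
      reduceAt (⟨0, hk⟩ : Fin k) ω = ρ

/-- Copy-correlated `k`-undistillability (singlet-fraction form). -/
def CopyCorrKUndistillableF (ι : Type) [Fintype ι] [DecidableEq ι] (k : ℕ) (hk : 0 < k)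
    (ρ : Matrix (ι × ι) (ι × ι) ℂ) : Prop :=
  ∃ ω : Matrix ((Fin k → ι) × (Fin k → ι)) ((Fin k → ι) × (Fin k → ι)) ℂ,
    IsState ω ∧ PermSymmetric ω ∧ SingleCopyUndistillableF ω ∧
      reduceAt (⟨0, hk⟩ : Fin k) ω = ρ

/-- Dual cone of a set of matrices, inside the Hermitian matrices. -/
def dualCone {n : Type} [Fintype n] (M : Set (Matrix n n ℂ)) : Set (Matrix n n ℂ) :=
  {X | X.IsHermitian ∧ ∀ ρ ∈ M, 0 ≤ (Matrix.trace (X * ρ)).re}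

/-- Separability: membership in the closed convex hull of the product states. -/
def SeparableState {ι : Type} [Fintype ι] (σ : Matrix (ι × ι) (ι × ι) ℂ) : Prop :=
  σ ∈ closure (convexHull ℝ
    {M : Matrix (ι × ι) (ι × ι) ℂ | ∃ α β : Matrix ι ι ℂ,
      IsState α ∧ IsState β ∧ M = kron α β})

open scoped MatrixOrder in
/-- Trace norm `‖X‖₁ = tr √(X†X)`. -/
def traceNorm {n : Type} [Fintype n] [DecidableEq n] (X : Matrix n n ℂ) : ℝ :=
  (CFC.sqrt (Xᴴ * X)).trace.re

/-- Symmetrization `Ŝ_k(Q) = (1/k!) ∑_{π ∈ S_k} P_π Q P_π`. -/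
def symmetrize {ι : Type} {k : ℕ}
    (Q : Matrix ((Fin k → ι) × (Fin k → ι)) ((Fin k → ι) × (Fin k → ι)) ℂ) :
    Matrix ((Fin k → ι) × (Fin k → ι)) ((Fin k → ι) × (Fin k → ι)) ℂ :=
  (1 / (Nat.factorial k : ℂ)) •
    ∑ π : Equiv.Perm (Fin k),
      Matrix.of fun x y => Q (x.1 ∘ π, x.2 ∘ π) (y.1 ∘ π, y.2 ∘ π)


instance matMeasurableSpace {m n : Type} [Fintype m] [Fintype n] :
    MeasurableSpace (Matrix m n ℂ) := borel _

/-- Partial trace over the last `n − k` bipartite factors. -/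
def traceTail {ι : Type} [Fintype ι] {n k : ℕ} (h : k ≤ n)
    (ω : Matrix ((Fin n → ι) × (Fin n → ι)) ((Fin n → ι) × (Fin n → ι)) ℂ) :
    Matrix ((Fin k → ι) × (Fin k → ι)) ((Fin k → ι) × (Fin k → ι)) ℂ :=
  Matrix.of fun x y =>
    ∑ tA : Fin (n - k) → ι, ∑ tB : Fin (n - k) → ι,
      ω (fun i => Fin.append x.1 tA (Fin.cast (by omega) i),
         fun i => Fin.append x.2 tB (Fin.cast (by omega) i))
        (fun i => Fin.append y.1 tA (Fin.cast (by omega) i),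
         fun i => Fin.append y.2 tB (Fin.cast (by omega) i))

/-- Partial trace over the last bipartite factor. -/
def traceLast {ι : Type} [Fintype ι] {k : ℕ}
    (ω : Matrix ((Fin (k + 1) → ι) × (Fin (k + 1) → ι))
      ((Fin (k + 1) → ι) × (Fin (k + 1) → ι)) ℂ) :
    Matrix ((Fin k → ι) × (Fin k → ι)) ((Fin k → ι) × (Fin k → ι)) ℂ :=
  Matrix.of fun x y => ∑ a : ι, ∑ b : ι,
    ω (Fin.snoc x.1 a, Fin.snoc x.2 b) (Fin.snoc y.1 a, Fin.snoc y.2 b)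

/-- `X ⊗ I^{⊗(k−1)}`: the operator acting as `X` on the first bipartite factor
and as the identity on the remaining `k − 1` factors. -/
def firstFactorOp {ι : Type} [DecidableEq ι] (k : ℕ) (hk : 0 < k)
    (X : Matrix (ι × ι) (ι × ι) ℂ) :
    Matrix ((Fin k → ι) × (Fin k → ι)) ((Fin k → ι) × (Fin k → ι)) ℂ :=
  Matrix.of fun x y =>
    X (x.1 ⟨0, hk⟩, x.2 ⟨0, hk⟩) (y.1 ⟨0, hk⟩, y.2 ⟨0, hk⟩) *
      ∏ i : Fin k, if i = ⟨0, hk⟩ then 1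
        else (if x.1 i = y.1 i ∧ x.2 i = y.2 i then 1 else 0)

/-- `⟨φ| ⊗ I₂` with `|φ⟩ = ∑ᵢ |i,i⟩` the unnormalized maximally entangled vector. -/
def jamA (d : ℕ) : Matrix (Fin 2) ((Fin d × Fin d) × Fin 2) ℂ :=
  Matrix.of fun s p => (if p.1.1 = p.1.2 then (1 : ℂ) else 0) * (if s = p.2 then 1 else 0)

/-- `σ ⊗ ρ` with tensor factors ordered as `((A₂A₁A₃), (B₂B₁B₃))`. -/
def jamState (d : ℕ) (σ : Matrix (Fin d × Fin d) (Fin d × Fin d) ℂ)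
    (ρ : Matrix ((Fin d × Fin 2) × (Fin d × Fin 2))
      ((Fin d × Fin 2) × (Fin d × Fin 2)) ℂ) :
    Matrix (((Fin d × Fin d) × Fin 2) × ((Fin d × Fin d) × Fin 2))
      (((Fin d × Fin d) × Fin 2) × ((Fin d × Fin d) × Fin 2)) ℂ :=
  Matrix.of fun x y =>
    σ (x.1.1.1, x.2.1.1) (y.1.1.1, y.2.1.1) *
      ρ ((x.1.1.2, x.1.2), (x.2.1.2, x.2.2)) ((y.1.1.2, y.1.2), (y.2.1.2, y.2.2))

/-- Joint operator `ρ ⊗ σ`, regrouped as a bipartite operator across the cut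
joining both A-parts against both B-parts. -/
def jointState {ι κ : Type} (ρ : Matrix (ι × ι) (ι × ι) ℂ)
    (σ : Matrix (κ × κ) (κ × κ) ℂ) :
    Matrix ((ι × κ) × (ι × κ)) ((ι × κ) × (ι × κ)) ℂ :=
  Matrix.of fun x y =>
    ρ (x.1.1, x.2.1) (y.1.1, y.2.1) * σ (x.1.2, x.2.2) (y.1.2, y.2.2)

/-! Each party filters its two `d`-dimensional factors (its half of `σ` and its half of `ρ`)
with `⟨Φ| ⊗ 𝟙`, `Φ = ∑ᵢ |i i⟩`. As in teleportation, this contraction turns `σ` into a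
transpose acting on `ρ`: the filtered two-qubit operator `M` satisfies
`tr[M X] = tr[ρ (σᵀ ⊗ X)]` for every `X`. The hypothesis thus says `tr[M (φ₂ − 𝟙/2)] > 0`,
which for the positive operator `M` means that its singlet fraction exceeds `1/2`. -/

open scoped Kronecker

lemma jointState_eq_submatrix {ι κ : Type} (ρ : Matrix (ι × ι) (ι × ι) ℂ)
    (σ : Matrix (κ × κ) (κ × κ) ℂ) :
    jointState ρ σ = (ρ ⊗ₖ σ).submatrix (fun x => ((x.1.1, x.2.1), (x.1.2, x.2.2)))
      (fun x => ((x.1.1, x.2.1), (x.1.2, x.2.2))) :=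
  rfl

theorem Matrix.PosSemidef.jointState {ι κ : Type} [Fintype ι] [Fintype κ]
    {ρ : Matrix (ι × ι) (ι × ι) ℂ} {σ : Matrix (κ × κ) (κ × κ) ℂ}
    (hρ : ρ.PosSemidef) (hσ : σ.PosSemidef) : (jointState ρ σ).PosSemidef :=
  jointState_eq_submatrix ρ σ ▸ (hρ.kronecker hσ).submatrix _

open scoped MatrixOrder in
theorem Matrix.PosSemidef.trace_mul_nonneg {n : Type} [Fintype n] [DecidableEq n]
    {P Q : Matrix n n ℂ} (hP : P.PosSemidef) (hQ : Q.PosSemidef) : 0 ≤ (P * Q).trace := by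
  obtain ⟨S, rfl⟩ := CStarAlgebra.nonneg_iff_eq_star_mul_self.mp hQ.nonneg
  rw [star_eq_conjTranspose, ← mul_assoc, trace_mul_cycle]
  exact (hP.mul_mul_conjTranspose_same S).trace_nonneg

theorem isStarProjection_phiD (D : ℕ) : IsStarProjection (phiD D) where
  isIdempotentElem := by
    ext p q
    have hdiag (a : ℂ) : ∑ r : Fin D × Fin D, (if r.1 = r.2 then a else 0) = D * a := by
      simp [Fintype.sum_prod_type]
    simp only [phiD, mul_apply, of_apply, ite_zero_mul_ite_zero]
    by_cases hpq : p.1 = p.2 ∧ q.1 = q.2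
    · simp only [hpq, true_and, and_true, and_self, hdiag, if_true]
      rcases eq_or_ne (D : ℂ) 0 with hD | hD
      · simp [hD]
      · field_simp
    · rw [if_neg hpq]
      exact Finset.sum_eq_zero fun r _ => if_neg (by tauto)
  isSelfAdjoint := by
    ext p q
    simp only [phiD, star_apply, of_apply]
    split_ifs <;> simp_all

section SingletFraction

variable {D : ℕ}

open scoped MatrixOrder in
theorem Matrix.PosSemidef.re_trace_mul_phiD_le
    {M : Matrix (Fin D × Fin D) (Fin D × Fin D) ℂ} (hM : M.PosSemidef) :
    (M * phiD D).trace.re ≤ M.trace.re := by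
  have h := (Complex.le_def.mp
    (hM.trace_mul_nonneg (isStarProjection_phiD D).one_sub_nonneg.posSemidef)).1
  simpa [mul_sub, trace_sub] using h

variable {I : Type} [Fintype I] [DecidableEq I] {ω : Matrix (I × I) (I × I) ℂ}

theorem le_singletFraction (hω : ω.PosSemidef) (A B : Matrix (Fin D) I ℂ)
    (hA : (kron A B * ω * (kron A B)ᴴ).trace ≠ 0) :
    (kron A B * ω * (kron A B)ᴴ * phiD D).trace.re / (kron A B * ω * (kron A B)ᴴ).trace.re ≤
      singletFraction D ω := by
  refine le_csSup ⟨1, ?_⟩ ⟨A, B, hA, rfl⟩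
  rintro _ ⟨A', B', -, rfl⟩
  have hM := hω.mul_mul_conjTranspose_same (kron A' B')
  exact div_le_one_of_le₀ hM.re_trace_mul_phiD_le (Complex.le_def.mp hM.trace_nonneg).1

theorem lt_singletFraction_of_re_trace_neg (hω : ω.PosSemidef) (A B : Matrix (Fin D) I ℂ)
    {c : ℝ}
    (h : (kron A B * ω * (kron A B)ᴴ * ((c : ℂ) • 1 - phiD D)).trace.re < 0) :
    c < singletFraction D ω := by
  set M := kron A B * ω * (kron A B)ᴴ
  have hM : M.PosSemidef := hω.mul_mul_conjTranspose_same _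
  have hsplit :
      (M * ((c : ℂ) • 1 - phiD D)).trace.re = c * M.trace.re - (M * phiD D).trace.re := by
    simp [mul_sub, trace_sub, trace_smul]
  rw [hsplit] at h
  have hpos : 0 < M.trace.re := by
    by_contra hle
    have h0 : M.trace.re = 0 :=
      le_antisymm (not_lt.mp hle) (Complex.le_def.mp hM.trace_nonneg).1
    rw [h0] at h
    linarith [hM.re_trace_mul_phiD_le]
  have hne : M.trace ≠ 0 := fun h0 => by rw [h0] at hpos; simp at hpos
  refine lt_of_lt_of_le ?_ (le_singletFraction hω A B hne)
  rw [lt_div_iff₀ hpos]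
  linarith

end SingletFraction

def maxEntBraTensorId (ι τ : Type) [DecidableEq ι] [DecidableEq τ] :
    Matrix τ (ι × (ι × τ)) ℂ :=
  of fun s p => if p.1 = p.2.1 ∧ s = p.2.2 then 1 else 0

section Filter

variable {ι τ : Type} [Fintype ι] [Fintype τ] [DecidableEq ι] [DecidableEq τ]

lemma kron_maxEntBraTensorId_mul_apply
    {K : Type} (W : Matrix ((ι × (ι × τ)) × (ι × (ι × τ))) K ℂ) (p : τ × τ) (y : K) :
    (kron (maxEntBraTensorId ι τ) (maxEntBraTensorId ι τ) * W) p y =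
      ∑ a : ι × ι, W ((a.1, (a.1, p.1)), (a.2, (a.2, p.2))) y := by
  simp [mul_apply, kron, maxEntBraTensorId, Fintype.sum_prod_type_right, ite_and]

lemma mul_conjTranspose_kron_maxEntBraTensorId_apply
    {K : Type} (W : Matrix K ((ι × (ι × τ)) × (ι × (ι × τ))) ℂ) (x : K) (q : τ × τ) :
    (W * (kron (maxEntBraTensorId ι τ) (maxEntBraTensorId ι τ))ᴴ) x q =
      ∑ b : ι × ι, W x ((b.1, (b.1, q.1)), (b.2, (b.2, q.2))) := by
  simp [mul_apply, kron, maxEntBraTensorId, Fintype.sum_prod_type_right, ite_and,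
    apply_ite]

theorem trace_kron_maxEntBraTensorId_jointState_mul (σ : Matrix (ι × ι) (ι × ι) ℂ)
    (ρ : Matrix ((ι × τ) × (ι × τ)) ((ι × τ) × (ι × τ)) ℂ) (X : Matrix (τ × τ) (τ × τ) ℂ) :
    (kron (maxEntBraTensorId ι τ) (maxEntBraTensorId ι τ) * jointState σ ρ *
        (kron (maxEntBraTensorId ι τ) (maxEntBraTensorId ι τ))ᴴ * X).trace =
      (ρ * jointState σᵀ X).trace := by
  -- split each index `((i, s), (j, t))` of `ρ` into its parts `(i, j)` and `(s, t)`
  let e := (Equiv.prodProdProdComm ι τ ι τ).symm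
  simp only [trace, diag, mul_apply (M := ρ), mul_apply (N := X),
    mul_conjTranspose_kron_maxEntBraTensorId_apply, kron_maxEntBraTensorId_mul_apply]
  rw [← e.sum_comp]
  simp only [← e.sum_comp (fun w => ρ _ w * _)]
  simp only [Fintype.sum_prod_type_right (α₁ := ι × ι), Finset.sum_mul, jointState, of_apply,
    transpose_apply]
  refine Finset.sum_congr rfl fun p _ => ?_
  conv_rhs => rw [Finset.sum_comm]
  refine Finset.sum_congr rfl fun q _ => ?_
  rw [Finset.sum_comm]
  refine Finset.sum_congr rfl fun a _ => Finset.sum_congr rfl fun b _ => ?_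
  simp only [e, Equiv.prodProdProdComm_symm, Equiv.prodProdProdComm_apply]
  ring

end Filter

/-- **Activation criterion:** if `tr[ρ (σ^T ⊗ (I₄/2 − φ₂))] < 0`, then the joint
state `σ ⊗ ρ` is single-copy distillable: `F₂(σ ⊗ ρ) > 1/2`. -/
theorem activation_criterion (d : ℕ)
    (σ : Matrix (Fin d × Fin d) (Fin d × Fin d) ℂ) (hσ : IsState σ)
    (ρ : Matrix ((Fin d × Fin 2) × (Fin d × Fin 2))
      ((Fin d × Fin 2) × (Fin d × Fin 2)) ℂ) (hρ : IsState ρ)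
    (h : (Matrix.trace (ρ *
        jointState σ.transpose ((1 / 2 : ℂ) • 1 - phiD 2))).re < 0) :
    1 / 2 < singletFraction 2 (jointState σ ρ) := by
  refine lt_singletFraction_of_re_trace_neg (hσ.1.jointState hρ.1)
    (maxEntBraTensorId (Fin d) (Fin 2)) (maxEntBraTensorId (Fin d) (Fin 2)) ?_
  rw [trace_kron_maxEntBraTensorId_jointState_mul]
  push_cast
  exact h
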